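/- arXiv:1112.1191 — 2 statements merged into one kernel-verified Lean document; each statement's English description precedes it below -/
import Mathlib

section
/- Let X be a continuum that is not homeomorphic to the circle. If J₁ and J₂ are free intervals of X that are each maximal with respect to inclusion among free intervals, then either J₁ ∩ J₂ = ∅ or J₁ = J₂. -/
/-- A free interval of `X`: an open subset homeomorphic to an open interval of ℝ. -/
def IsFreeInterval {X : Type*} [TopologicalSpace X] (J : Set X) : Prop :=
  IsOpen J ∧ Nonempty (↥J ≃ₜ ℝ)

/-!
Parametrize `J₁ = f₁ ℝ` and `J₂ = f₂ ℝ` by open embeddings and let `τ` be the transition map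
from `S = f₁⁻¹ J₂` onto `T = f₂⁻¹ J₁`. Because `X` is Hausdorff, `τ` is unbounded near every
finite end point of a component of `S`. A bounded component of `S` would therefore be carried
onto all of `ℝ`, i.e. `J₂ ⊆ J₁`. So if neither interval contains the other, `S` and `T` each
consist of one or two open rays, and as `τ` is a homeomorphism they consist of equally many.
With one ray each, `f₁` and `f₂` glue to a single chart of `J₁ ∪ J₂`, which by maximality equals
`J₁` and `J₂`. With two rays each, a compact arc of `J₁` and one of `J₂` meet exactly in their
end points; their union is a circle that is open and compact in the connected space `X`, hence
all of `X`.
-/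

open Set Function Topology Bornology

section OrderTopology

variable {α : Type*} [ConditionallyCompleteLinearOrder α] [TopologicalSpace α] [OrderTopology α]

theorem IsClosed.exists_Ioc_subset_compl {F : Set α} (hF : IsClosed F) {x t : α} (hx : x ∈ F)
    (ht : t ∉ F) (hxt : x < t) : ∃ l ∈ F, l < t ∧ Ioc l t ⊆ Fᶜ := by
  have hA : IsClosed (F ∩ Icc x t) := hF.inter isClosed_Icc
  have hbdd : BddAbove (F ∩ Icc x t) := ⟨t, fun z hz => hz.2.2⟩
  obtain ⟨hlF, -, hlt⟩ := hA.csSup_mem ⟨x, hx, left_mem_Icc.2 hxt.le⟩ hbdd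
  refine ⟨_, hlF, hlt.lt_of_ne (ne_of_mem_of_not_mem hlF ht), fun z hz hzF => ?_⟩
  have hxz : x ≤ z := (le_csSup hbdd ⟨hx, left_mem_Icc.2 hxt.le⟩).trans hz.1.le
  exact hz.1.not_ge (le_csSup hbdd ⟨hzF, hxz, hz.2⟩)

theorem IsClosed.exists_Ico_subset_compl {F : Set α} (hF : IsClosed F) {y t : α} (hy : y ∈ F)
    (ht : t ∉ F) (hty : t < y) : ∃ r ∈ F, t < r ∧ Ico t r ⊆ Fᶜ :=
  let ⟨r, hr, htr, hsub⟩ := IsClosed.exists_Ioc_subset_compl (α := αᵒᵈ) hF hy ht hty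
  ⟨r, hr, htr, fun _ hz => hsub ⟨hz.2, hz.1⟩⟩

variable [DenselyOrdered α]

theorem ContinuousOn.strictMonoOn_or_strictAntiOn {s : Set α} [s.OrdConnected] (hne : s.Nonempty)
    {f : α → ℝ} (hc : ContinuousOn f s) (hi : InjOn f s) :
    StrictMonoOn f s ∨ StrictAntiOn f s := by
  have : Inhabited s := ⟨⟨_, hne.some_mem⟩⟩
  exact (Continuous.strictMono_of_inj hc.domRestrict hi.injective).imp strictMono_domRestrict.mp
    strictAntiOn_iff_strictAnti.mpr

variable [NoMinOrder α] [NoMaxOrder α] {U : Set α}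

theorem IsUpperSet.eq_empty_or_eq_Ioi (hup : IsUpperSet U) (hU : IsOpen U) (hb : BddBelow U) :
    U = ∅ ∨ ∃ a, U = Ioi a := by
  refine U.eq_empty_or_nonempty.imp id fun hne => ⟨sInf U, Subset.antisymm (fun z hz => ?_)
    (hup.ordConnected.isPreconnected.Ioi_csInf_subset hb (hup.not_bddAbove hne))⟩
  obtain ⟨l, hl, hlU⟩ := exists_Ioc_subset_of_mem_nhds (hU.mem_nhds hz) (exists_lt z)
  obtain ⟨w, hlw, hwz⟩ := exists_between hl
  exact (csInf_le hb (hlU ⟨hlw, hwz.le⟩)).trans_lt hwz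

theorem IsLowerSet.eq_empty_or_eq_Iio (hlow : IsLowerSet U) (hU : IsOpen U) (hb : BddAbove U) :
    U = ∅ ∨ ∃ b, U = Iio b :=
  IsUpperSet.eq_empty_or_eq_Ioi (α := αᵒᵈ) hlow hU hb

end OrderTopology

theorem compl_Icc_subset_Iio_union_Ioi {α : Type*} [LinearOrder α] {p q a b : α} (hp : p < b)
    (hq : a < q) : (Icc p q)ᶜ ⊆ Iio b ∪ Ioi a := fun t ht => by
  rcases not_and_or.1 ht with h | h
  exacts [Or.inl ((not_le.1 h).trans hp), Or.inr (hq.trans (not_le.1 h))]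

theorem compl_Ioo_subset_Iio_union_Ioi {α : Type*} [LinearOrder α] {c d a b : α} (hc : c < b)
    (hd : a < d) : (Ioo c d)ᶜ ⊆ Iio b ∪ Ioi a := fun t ht => by
  rcases not_and_or.1 ht with h | h
  exacts [Or.inl ((not_lt.1 h).trans_lt hc), Or.inr (hd.trans_le (not_lt.1 h))]

theorem IsPreconnected.subset_Iio_or_subset_Ioi {α : Type*} [LinearOrder α] [TopologicalSpace α]
    [OrderTopology α] {s : Set α} (hs : IsPreconnected s) {a b : α} (hba : b ≤ a)
    (hsub : s ⊆ Iio b ∪ Ioi a) : s ⊆ Iio b ∨ s ⊆ Ioi a :=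
  hs.subset_or_subset isOpen_Iio isOpen_Ioi (Iio_disjoint_Ioi_of_le hba) hsub

theorem not_isPreconnected_Iio_union_Ioi {a b : ℝ} (hba : b ≤ a) :
    ¬IsPreconnected (Iio b ∪ Ioi a) := fun h => by
  rcases h.subset_Iio_or_subset_Ioi hba subset_rfl with h | h
  · exact (h (Or.inr (lt_add_one a))).not_ge (hba.trans (lt_add_one a).le)
  · exact (h (Or.inl (sub_one_lt b))).not_ge ((sub_one_lt b).le.trans hba)

theorem IsPreconnected.eq_univ_of_unbounded_halves {P P₁ P₂ : Set ℝ} (hP : IsPreconnected P)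
    (h₁ : P₁ ⊆ P) (h₂ : P₂ ⊆ P) (hP₁ : ¬IsBounded P₁) (hP₂ : ¬IsBounded P₂) {c : ℝ}
    (hc₁ : P₁ ⊆ Iic c) (hc₂ : P₂ ⊆ Ici c) : P = univ := by
  refine hP.eq_univ_of_unbounded (fun hb => hP₁ ?_) (fun ha => hP₂ ?_)
  · exact isBounded_iff_bddBelow_bddAbove.2 ⟨hb.mono h₁, bddAbove_Iic.mono hc₁⟩
  · exact isBounded_iff_bddBelow_bddAbove.2 ⟨bddBelow_Ici.mono hc₂, ha.mono h₂⟩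

def IsOpenRay (s : Set ℝ) : Prop := ∃ c, s = Ioi c ∨ s = Iio c

theorem IsOpenRay.isPreconnected {s : Set ℝ} (hs : IsOpenRay s) : IsPreconnected s := by
  obtain ⟨c, rfl | rfl⟩ := hs
  exacts [isPreconnected_Ioi, isPreconnected_Iio]

theorem Set.eq_of_union_eq_of_subset {α : Type*} {A B P Q : Set α} (h : A ∪ B = P ∪ Q)
    (hA : A ⊆ P) (hB : B ⊆ Q) (hPQ : Disjoint P Q) : A = P ∧ B = Q := by
  refine ⟨hA.antisymm fun x hx => ?_, hB.antisymm fun x hx => ?_⟩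
  · exact (h.ge (Or.inl hx)).resolve_right fun hB' => disjoint_left.1 hPQ hx (hB hB')
  · exact (h.ge (Or.inr hx)).resolve_left fun hA' => disjoint_left.1 hPQ (hA hA') hx

noncomputable def extendByTranslation (τ : ℝ → ℝ) (q u : ℝ) : ℝ :=
  if u ≤ q then τ u else u - q + τ q

theorem StrictMonoOn.extendByTranslation {τ : ℝ → ℝ} {a q : ℝ} (h : StrictMonoOn τ (Ioc a q)) :
    StrictMonoOn (extendByTranslation τ q) (Ioi a) := by
  intro u hu v hv huv
  unfold _root_.extendByTranslation
  split_ifs with huq hvq hvq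
  · exact h ⟨hu, huq⟩ ⟨hv, hvq⟩ huv
  · have := h.monotoneOn ⟨hu, huq⟩ ⟨hu.trans_le huq, le_rfl⟩ huq
    linarith
  · exact absurd (huv.le.trans hvq) huq
  · linarith

theorem image_extendByTranslation {τ : ℝ → ℝ} {a q : ℝ} (haq : a < q)
    (h : Iic (τ q) ⊆ τ '' Ioc a q) : extendByTranslation τ q '' Ioi a = univ := by
  refine eq_univ_of_forall fun y => ?_
  rcases le_or_gt y (τ q) with hy | hy
  · obtain ⟨t, ht, rfl⟩ := h hy
    exact ⟨t, ht.1, if_pos ht.2⟩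
  · refine ⟨y - τ q + q, by simp only [mem_Ioi]; linarith, ?_⟩
    rw [extendByTranslation, if_neg (by linarith)]
    ring

theorem mem_Icc_iff_notMem_Ioo_of_strictMonoOn {τ : ℝ → ℝ} {a b a' b' p q : ℝ} (hba : b ≤ a)
    (hba' : b' ≤ a') (hp : p < b) (hq : a < q) (hIoi : τ '' Ioi a = Iio b')
    (hIio : τ '' Iio b = Ioi a') (hmIoi : StrictMonoOn τ (Ioi a))
    (hmIio : StrictMonoOn τ (Iio b)) {t : ℝ} (ht : t ∈ Iio b ∪ Ioi a) :
    t ∈ Icc p q ↔ τ t ∉ Ioo (τ q) (τ p) := by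
  have hτq : τ q < b' := hIoi.subset (mem_image_of_mem τ hq)
  have hτp : a' < τ p := hIio.subset (mem_image_of_mem τ hp)
  simp only [mem_Icc, mem_Ioo, not_and, not_lt]
  rcases ht with htb | hta
  · have hτt : a' < τ t := hIio.subset (mem_image_of_mem τ htb)
    have := hmIio.le_iff_le hp htb
    exact ⟨fun h _ => this.2 h.1, fun h => ⟨this.1 (h (by linarith)), by linarith [mem_Iio.1 htb]⟩⟩
  · have hτt : τ t < b' := hIoi.subset (mem_image_of_mem τ hta)
    have := hmIoi.le_iff_le hta hq
    exact ⟨fun h h' => absurd (this.2 h.2) h'.not_ge,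
      fun h => ⟨by linarith [mem_Ioi.1 hta], this.1 (not_lt.1 fun h' => by linarith [h h'])⟩⟩

theorem nonempty_homeomorph_addCircle_of_injOn {X : Type*} [TopologicalSpace X] [CompactSpace X]
    [ConnectedSpace X] [T2Space X] {γ : ℝ → X} {p L : ℝ} (hL : 0 < L) (hγ : Continuous γ)
    (hper : γ p = γ (p + L)) (hinj : InjOn γ (Ico p (p + L)))
    (hopen : IsOpen (γ '' Icc p (p + L))) : Nonempty (X ≃ₜ AddCircle (1 : ℝ)) := by
  have : Fact (0 < L) := ⟨hL⟩
  set G := AddCircle.liftIco L p γ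
  have hGc : Continuous G := AddCircle.liftIco_continuous hper hγ.continuousOn
  have hG (z : AddCircle L) : G z = γ (AddCircle.equivIco L p z) := rfl
  have hGinj : Injective G := fun z w h => by
    rw [hG, hG] at h
    exact (AddCircle.equivIco L p).injective
      (Subtype.ext (hinj (AddCircle.equivIco L p z).2 (AddCircle.equivIco L p w).2 h))
  have hrange : range G = γ '' Icc p (p + L) := by
    refine Subset.antisymm ?_ fun _ ⟨x, hx, hγx⟩ => ?_
    · rintro _ ⟨z, rfl⟩
      exact ⟨_, Ico_subset_Icc_self (AddCircle.equivIco L p z).2, (hG z).symm⟩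
    rcases hx.2.lt_or_eq with hxL | rfl
    · exact ⟨x, hγx ▸ AddCircle.liftIco_coe_apply ⟨hx.1, hxL⟩⟩
    · exact ⟨p, hγx ▸ hper ▸ AddCircle.liftIco_coe_apply ⟨le_rfl, lt_add_of_pos_right p hL⟩⟩
  have hsurj : Surjective G := range_eq_univ.1 <|
    IsClopen.eq_univ ⟨(isCompact_range hGc).isClosed, hrange ▸ hopen⟩ (range_nonempty G)
  exact ⟨(hGc.homeoOfEquivCompactToT2 (f := Equiv.ofBijective G ⟨hGinj, hsurj⟩)).symm.trans
    (AddCircle.homeomorphAddCircle _ _ hL.ne' one_ne_zero)⟩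

section FreeIntervals

variable {X : Type*} [TopologicalSpace X]

theorem IsFreeInterval.exists_isOpenEmbedding {J : Set X} (hJ : IsFreeInterval J) :
    ∃ f : ℝ → X, IsOpenEmbedding f ∧ range f = J := by
  obtain ⟨hJo, ⟨e⟩⟩ := hJ
  refine ⟨Subtype.val ∘ e.symm, hJo.isOpenEmbedding_subtypeVal.comp e.symm.isOpenEmbedding, ?_⟩
  rw [range_comp, e.symm.range_coe, image_univ, Subtype.range_coe]

theorem Topology.IsOpenEmbedding.isFreeInterval_range {f : ℝ → X} (hf : IsOpenEmbedding f) :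
    IsFreeInterval (range f) :=
  ⟨hf.isOpen_range, ⟨hf.isEmbedding.toHomeomorph.symm⟩⟩

theorem Topology.IsOpenEmbedding.comp_neg {f : ℝ → X} (hf : IsOpenEmbedding f) :
    IsOpenEmbedding (f ∘ Neg.neg) :=
  hf.comp (Homeomorph.neg ℝ).isOpenEmbedding

theorem exists_reparametrization_preimage_eq_Ioi {f : ℝ → X} (hf : IsOpenEmbedding f)
    {J : Set X} (h : IsOpenRay (f ⁻¹' J)) :
    ∃ g : ℝ → X, IsOpenEmbedding g ∧ range g = range f ∧ ∃ a, g ⁻¹' J = Ioi a := by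
  obtain ⟨c, hc | hc⟩ := h
  · exact ⟨f, hf, rfl, c, hc⟩
  · refine ⟨f ∘ Neg.neg, hf.comp_neg, neg_surjective.range_comp f, -c, ?_⟩
    rw [preimage_comp, hc]
    simp

theorem exists_reparametrization_preimage_eq_Iio {f : ℝ → X} (hf : IsOpenEmbedding f)
    {J : Set X} (h : IsOpenRay (f ⁻¹' J)) :
    ∃ g : ℝ → X, IsOpenEmbedding g ∧ range g = range f ∧ ∃ b, g ⁻¹' J = Iio b := by
  obtain ⟨c, hc | hc⟩ := h
  · refine ⟨f ∘ Neg.neg, hf.comp_neg, neg_surjective.range_comp f, -c, ?_⟩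
    rw [preimage_comp, hc]
    simp
  · exact ⟨f, hf, rfl, c, hc⟩

end FreeIntervals

namespace FreeInterval

variable {X : Type*} {f₁ f₂ : ℝ → X}

noncomputable def transition (f₁ f₂ : ℝ → X) (t : ℝ) : ℝ := invFun f₂ (f₁ t)

theorem apply_transition {t : ℝ} (ht : t ∈ f₁ ⁻¹' range f₂) :
    f₂ (transition f₁ f₂ t) = f₁ t :=
  invFun_eq ht

theorem transition_eq_iff (hf₂ : Injective f₂) {t s : ℝ} (ht : t ∈ f₁ ⁻¹' range f₂) :
    transition f₁ f₂ t = s ↔ f₁ t = f₂ s :=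
  ⟨fun h => h ▸ (apply_transition ht).symm, fun h => hf₂ ((apply_transition ht).trans h)⟩

theorem mapsTo_transition : MapsTo (transition f₁ f₂) (f₁ ⁻¹' range f₂) (f₂ ⁻¹' range f₁) :=
  fun t ht => ⟨t, (apply_transition ht).symm⟩

theorem transition_transition (hf₁ : Injective f₁) {t : ℝ} (ht : t ∈ f₁ ⁻¹' range f₂) :
    transition f₂ f₁ (transition f₁ f₂ t) = t :=
  (transition_eq_iff hf₁ (mapsTo_transition ht)).2 (apply_transition ht)

theorem injOn_transition (hf₁ : Injective f₁) : InjOn (transition f₁ f₂) (f₁ ⁻¹' range f₂) :=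
  fun t ht s hs h => by
    rw [← transition_transition hf₁ ht, h, transition_transition hf₁ hs]

theorem image_transition (hf₂ : Injective f₂) :
    transition f₁ f₂ '' (f₁ ⁻¹' range f₂) = f₂ ⁻¹' range f₁ :=
  (mapsTo_transition.image_subset).antisymm fun s hs =>
    ⟨transition f₂ f₁ s, mapsTo_transition hs, transition_transition hf₂ hs⟩

noncomputable def glue (f₁ f₂ : ℝ → X) (q c u : ℝ) : X :=
  if u ≤ q then f₁ u else f₂ (u - q + c)

theorem glue_of_le {q c u : ℝ} (hu : u ≤ q) : glue f₁ f₂ q c u = f₁ u := if_pos hu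

theorem glue_of_lt {q c u : ℝ} (hu : q < u) : glue f₁ f₂ q c u = f₂ (u - q + c) :=
  if_neg hu.not_ge

theorem range_glue_subset {q c : ℝ} : range (glue f₁ f₂ q c) ⊆ range f₁ ∪ range f₂ := by
  rintro _ ⟨u, rfl⟩
  rcases le_or_gt u q with hu | hu
  · exact Or.inl ⟨u, (glue_of_le hu).symm⟩
  · exact Or.inr ⟨_, (glue_of_lt hu).symm⟩

theorem image_Icc_union_image_Ioo_subset_image_glue {p q c d : ℝ} (hpq : p ≤ q) (hcd : c ≤ d) :
    f₁ '' Icc p q ∪ f₂ '' Ioo c d ⊆ glue f₁ f₂ q c '' Icc p (q + (d - c)) := by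
  rintro _ (⟨t, ht, rfl⟩ | ⟨s, hs, rfl⟩)
  · exact ⟨t, ⟨ht.1, by linarith [ht.2]⟩, glue_of_le ht.2⟩
  · refine ⟨s - c + q, ⟨by linarith [hs.1, hpq], by linarith [hs.2]⟩, ?_⟩
    rw [glue_of_lt (by linarith [hs.1])]
    ring_nf

theorem injOn_glue (hf₁ : Injective f₁) (hf₂ : Injective f₂) {p q c d : ℝ}
    (hsep : ∀ t ∈ Icc p q, ∀ s ∈ Ioo c d, f₁ t ≠ f₂ s) :
    InjOn (glue f₁ f₂ q c) (Ico p (q + (d - c))) := by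
  have hcross : ∀ u ∈ Ico p (q + (d - c)), ∀ v ∈ Ico p (q + (d - c)), u ≤ q → q < v →
      glue f₁ f₂ q c u ≠ glue f₁ f₂ q c v := fun u hu v hv huq hqv => by
    rw [glue_of_le huq, glue_of_lt hqv]
    exact hsep u ⟨hu.1, huq⟩ _ ⟨by linarith, by linarith [hv.2]⟩
  intro u hu v hv huv
  rcases le_or_gt u q with huq | huq <;> rcases le_or_gt v q with hvq | hvq
  · exact hf₁ (by rwa [glue_of_le huq, glue_of_le hvq] at huv)
  · exact absurd huv (hcross u hu v hv huq hvq)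
  · exact absurd huv.symm (hcross v hv u hu hvq huq)
  · rw [glue_of_lt huq, glue_of_lt hvq] at huv
    linarith [hf₂ huv]

theorem eqOn_glue_transition {a q : ℝ} (hsub : Ioi a ⊆ f₁ ⁻¹' range f₂) :
    EqOn (glue f₁ f₂ q (transition f₁ f₂ q)) (f₂ ∘ extendByTranslation (transition f₁ f₂) q)
      (Ioi a) := fun u hu => by
  rcases le_or_gt u q with huq | huq
  · rw [glue_of_le huq, comp_apply, extendByTranslation, if_pos huq, apply_transition (hsub hu)]
  · rw [glue_of_lt huq, comp_apply, extendByTranslation, if_neg huq.not_ge]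

theorem range_union_range_subset_of_mem_Icc_iff (hf₂ : Injective f₂) {p q c d : ℝ}
    (hS : (Icc p q)ᶜ ⊆ f₁ ⁻¹' range f₂) (hT : (Ioo c d)ᶜ ⊆ f₂ ⁻¹' range f₁)
    (hiff : ∀ t ∈ f₁ ⁻¹' range f₂, t ∈ Icc p q ↔ transition f₁ f₂ t ∉ Ioo c d) :
    range f₁ ∪ range f₂ ⊆ f₁ '' Icc p q ∪ f₂ '' Ioo c d := by
  rintro _ (⟨t, rfl⟩ | ⟨s, rfl⟩)
  · by_cases ht : t ∈ Icc p q
    · exact Or.inl (mem_image_of_mem f₁ ht)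
    · exact Or.inr ⟨_, not_not.1 (mt (hiff t (hS ht)).2 ht), apply_transition (hS ht)⟩
  · by_cases hs : s ∈ Ioo c d
    · exact Or.inr (mem_image_of_mem f₂ hs)
    · obtain ⟨t, ht, rfl⟩ := (image_transition hf₂).ge (hT hs)
      exact Or.inl ⟨t, (hiff t ht).2 hs, (apply_transition ht).symm⟩

variable [TopologicalSpace X]

theorem continuousOn_transition (hf₁ : Continuous f₁) (hf₂ : IsOpenEmbedding f₂) :
    ContinuousOn (transition f₁ f₂) (f₁ ⁻¹' range f₂) := by
  have hinv : ContinuousOn (invFun f₂) (range f₂) := by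
    have := (hf₂.toOpenPartialHomeomorph f₂).continuousOn_symm
    rw [hf₂.toOpenPartialHomeomorph_target] at this
    refine this.congr ?_
    rintro _ ⟨s, rfl⟩
    rw [hf₂.toOpenPartialHomeomorph_left_inv, leftInverse_invFun hf₂.injective s]
  exact hinv.comp hf₁.continuousOn fun _ ht => ht

theorem isPreconnected_preimage_range (hf₁ : IsOpenEmbedding f₁) (hf₂ : IsOpenEmbedding f₂)
    (h : IsPreconnected (f₁ ⁻¹' range f₂)) : IsPreconnected (f₂ ⁻¹' range f₁) :=
  image_transition hf₂.injective ▸ h.image _ (continuousOn_transition hf₁.continuous hf₂)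

theorem continuous_glue (hf₁ : Continuous f₁) (hf₂ : Continuous f₂) {q c : ℝ}
    (h : f₁ q = f₂ c) : Continuous (glue f₁ f₂ q c) :=
  continuous_if_le continuous_id continuous_const hf₁.continuousOn
    (hf₂.comp (by fun_prop)).continuousOn fun u hu => by simp [hu, h]

theorem isLocalHomeomorph_of_eqOn (hf₁ : IsOpenEmbedding f₁) (hf₂ : IsOpenEmbedding f₂)
    {g : ℝ → X} {ρ : ℝ → ℝ} {a q : ℝ} (haq : a < q) (hρ : StrictMonoOn ρ (Ioi a))
    (hρs : ρ '' Ioi a = univ) (h₁ : EqOn g f₁ (Iio q)) (h₂ : EqOn g (f₂ ∘ ρ) (Ioi a)) :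
    IsLocalHomeomorph g := by
  refine isLocalHomeomorph_iff_isOpenEmbedding_restrict.2 fun u => ?_
  rcases lt_or_ge u q with hu | hu
  · refine ⟨Iio q, Iio_mem_nhds hu, ?_⟩
    rw [show (Iio q).domRestrict g = f₁ ∘ Subtype.val from funext fun v => h₁ v.2]
    exact hf₁.comp isOpen_Iio.isOpenEmbedding_subtypeVal
  · refine ⟨Ioi a, Ioi_mem_nhds (haq.trans_le hu), ?_⟩
    have hsurj : Surjective ((Ioi a).domRestrict ρ) := fun y => by
      obtain ⟨v, hv, rfl⟩ := hρs.symm ▸ mem_univ y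
      exact ⟨⟨v, hv⟩, rfl⟩
    let E := StrictMono.orderIsoOfSurjective _ (strictMono_domRestrict.2 hρ) hsurj
    rw [show (Ioi a).domRestrict g = f₂ ∘ E from funext fun v => h₂ v.2]
    exact hf₂.comp E.toHomeomorph.isOpenEmbedding

theorem image_transition_Ioi_Iio (hf₁ : IsOpenEmbedding f₁) (hf₂ : IsOpenEmbedding f₂)
    {a b a' b' : ℝ} (hba' : b' ≤ a') (hS : f₁ ⁻¹' range f₂ = Iio b ∪ Ioi a)
    (hT : f₂ ⁻¹' range f₁ = Iio b' ∪ Ioi a') (hsub : f₁ '' Ioi a ⊆ f₂ '' Iio b') :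
    transition f₁ f₂ '' Ioi a = Iio b' ∧ transition f₁ f₂ '' Iio b = Ioi a' := by
  set τ := transition f₁ f₂
  have hIioS : Iio b ⊆ f₁ ⁻¹' range f₂ := hS ▸ subset_union_left
  have hcover : τ '' Ioi a ∪ τ '' Iio b = Iio b' ∪ Ioi a' := by
    rw [← image_union, union_comm, ← hS, ← hT]
    exact image_transition hf₂.injective
  have hτIoi : τ '' Ioi a ⊆ Iio b' := by
    rintro _ ⟨t, ht, rfl⟩
    obtain ⟨s, hs, hst⟩ := hsub (mem_image_of_mem f₁ ht)
    rwa [show τ t = s from (transition_eq_iff hf₂.injective (hS ▸ Or.inr ht)).2 hst.symm]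
  have hτIio : τ '' Iio b ⊆ Ioi a' := by
    refine ((isPreconnected_Iio.image τ ((continuousOn_transition hf₁.continuous hf₂).mono
      hIioS)).subset_Iio_or_subset_Ioi hba' (hcover ▸ subset_union_right)).resolve_left
      fun h => ?_
    rcases hcover.ge (Or.inr (lt_add_one a')) with h' | h'
    · exact (hba'.trans (lt_add_one a').le).not_gt (hτIoi h')
    · exact (hba'.trans (lt_add_one a').le).not_gt (h h')
  exact Set.eq_of_union_eq_of_subset hcover hτIoi hτIio (Iio_disjoint_Ioi_of_le hba')

variable [T2Space X]

theorem closure_subset_of_isBounded_image (hf₁ : Continuous f₁) (hf₂ : Continuous f₂)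
    {C : Set ℝ} (hC : C ⊆ f₁ ⁻¹' range f₂) (hb : IsBounded (transition f₁ f₂ '' C)) :
    closure C ⊆ f₁ ⁻¹' range f₂ := by
  set K := closure (transition f₁ f₂ '' C)
  have hK : IsClosed (f₂ '' K) := (hb.isCompact_closure.image hf₂).isClosed
  have himage : f₁ '' C ⊆ f₂ '' K := by
    rintro _ ⟨t, ht, rfl⟩
    exact ⟨_, subset_closure (mem_image_of_mem _ ht), apply_transition (hC ht)⟩
  calc closure C ⊆ f₁ ⁻¹' closure (f₁ '' C) := closure_subset_preimage_closure_image hf₁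
    _ ⊆ f₁ ⁻¹' (f₂ '' K) := preimage_mono (hK.closure_subset_iff.2 himage)
    _ ⊆ f₁ ⁻¹' range f₂ := preimage_mono (image_subset_range _ _)

/-- A bounded component `(l, r)` of the overlap would be carried onto all of `ℝ`: the transition
map is monotone there and escapes to infinity at both ends. -/
theorem preimage_range_eq_univ_of_mem_Ioo (hf₁ : IsOpenEmbedding f₁) (hf₂ : IsOpenEmbedding f₂)
    {x t y : ℝ} (hx : x ∉ f₁ ⁻¹' range f₂) (hy : y ∉ f₁ ⁻¹' range f₂)
    (ht : t ∈ f₁ ⁻¹' range f₂) (hxt : x < t) (hty : t < y) : f₂ ⁻¹' range f₁ = univ := by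
  set S := f₁ ⁻¹' range f₂
  set τ := transition f₁ f₂
  have hSc : IsClosed Sᶜ := (hf₂.isOpen_range.preimage hf₁.continuous).isClosed_compl
  obtain ⟨l, hl, hlt, hlS⟩ := hSc.exists_Ioc_subset_compl hx (not_not.2 ht) hxt
  obtain ⟨r, hr, htr, hrS⟩ := hSc.exists_Ico_subset_compl hy (not_not.2 ht) hty
  have hI : Ioo l r ⊆ S := fun z hz => by
    rcases le_or_gt z t with h | h
    · simpa using hlS ⟨hz.1, h⟩
    · simpa using hrS ⟨h.le, hz.2⟩
  have hτc : ContinuousOn τ (Ioo l r) := (continuousOn_transition hf₁.continuous hf₂).mono hI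
  have hunb {C : Set ℝ} {β : ℝ} (hC : C ⊆ Ioo l r) (hβ : β ∉ S) (hβC : β ∈ closure C) :
      ¬IsBounded (τ '' C) := fun hb =>
    hβ (closure_subset_of_isBounded_image hf₁.continuous hf₂.continuous (hC.trans hI) hb hβC)
  have h₁ : ¬IsBounded (τ '' Ioo l t) :=
    hunb (Ioo_subset_Ioo_right htr.le) hl (by simp [closure_Ioo hlt.ne, hlt.le])
  have h₂ : ¬IsBounded (τ '' Ioo t r) :=
    hunb (Ioo_subset_Ioo_left hlt.le) hr (by simp [closure_Ioo htr.ne, htr.le])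
  have hsub₁ : τ '' Ioo l t ⊆ τ '' Ioo l r := image_mono (Ioo_subset_Ioo_right htr.le)
  have hsub₂ : τ '' Ioo t r ⊆ τ '' Ioo l r := image_mono (Ioo_subset_Ioo_left hlt.le)
  have hP : IsPreconnected (τ '' Ioo l r) := isPreconnected_Ioo.image _ hτc
  have htI : t ∈ Ioo l r := ⟨hlt, htr⟩
  have huniv : τ '' Ioo l r = univ := by
    rcases hτc.strictMonoOn_of_injOn_Ioo (hlt.trans htr)
      ((injOn_transition hf₁.injective).mono hI) with hm | hm
    · refine hP.eq_univ_of_unbounded_halves hsub₁ hsub₂ h₁ h₂ (c := τ t) ?_ ?_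
      · exact image_subset_iff.2 fun z hz => (hm ⟨hz.1, hz.2.trans htr⟩ htI hz.2).le
      · exact image_subset_iff.2 fun z hz => (hm htI ⟨hlt.trans hz.1, hz.2⟩ hz.1).le
    · refine hP.eq_univ_of_unbounded_halves hsub₂ hsub₁ h₂ h₁ (c := τ t) ?_ ?_
      · exact image_subset_iff.2 fun z hz => (hm htI ⟨hlt.trans hz.1, hz.2⟩ hz.1).le
      · exact image_subset_iff.2 fun z hz => (hm ⟨hz.1, hz.2.trans htr⟩ htI hz.2).le
  exact eq_univ_of_univ_subset (huniv ▸ (image_mono hI).trans mapsTo_transition.image_subset)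

theorem isUpperSet_preimage_range_inter_Ioi (hf₁ : IsOpenEmbedding f₁)
    (hf₂ : IsOpenEmbedding f₂) (hT : f₂ ⁻¹' range f₁ ≠ univ) {x₀ : ℝ}
    (hx₀ : x₀ ∉ f₁ ⁻¹' range f₂) : IsUpperSet (f₁ ⁻¹' range f₂ ∩ Ioi x₀) := by
  rintro z w hzw ⟨hz, hx₀z⟩
  refine ⟨by_contra fun hw => hT ?_, hx₀z.trans_le hzw⟩
  exact preimage_range_eq_univ_of_mem_Ioo hf₁ hf₂ hx₀ hw hz hx₀z
    (hzw.lt_of_ne (ne_of_mem_of_not_mem hz hw))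

theorem isLowerSet_preimage_range_inter_Iio (hf₁ : IsOpenEmbedding f₁)
    (hf₂ : IsOpenEmbedding f₂) (hT : f₂ ⁻¹' range f₁ ≠ univ) {x₀ : ℝ}
    (hx₀ : x₀ ∉ f₁ ⁻¹' range f₂) : IsLowerSet (f₁ ⁻¹' range f₂ ∩ Iio x₀) := by
  rintro z w hwz ⟨hz, hzx₀⟩
  refine ⟨by_contra fun hw => hT ?_, hwz.trans_lt hzx₀⟩
  exact preimage_range_eq_univ_of_mem_Ioo hf₁ hf₂ hw hx₀ hz
    (hwz.lt_of_ne (ne_of_mem_of_not_mem hz hw).symm) hzx₀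

theorem isOpenRay_or_eq_Iio_union_Ioi (hf₁ : IsOpenEmbedding f₁) (hf₂ : IsOpenEmbedding f₂)
    (hne : (f₁ ⁻¹' range f₂).Nonempty) (hS : f₁ ⁻¹' range f₂ ≠ univ)
    (hT : f₂ ⁻¹' range f₁ ≠ univ) :
    IsOpenRay (f₁ ⁻¹' range f₂) ∨ ∃ b a, b ≤ a ∧ f₁ ⁻¹' range f₂ = Iio b ∪ Ioi a := by
  set S := f₁ ⁻¹' range f₂
  obtain ⟨x₀, hx₀⟩ := (ne_univ_iff_exists_notMem S).1 hS
  have hSo : IsOpen S := hf₂.isOpen_range.preimage hf₁.continuous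
  have hsplit : S = (S ∩ Iio x₀) ∪ (S ∩ Ioi x₀) := by
    rw [← inter_union_distrib_left, Iio_union_Ioi, ← sdiff_eq, sdiff_singleton_eq_self hx₀]
  rcases (isLowerSet_preimage_range_inter_Iio hf₁ hf₂ hT hx₀).eq_empty_or_eq_Iio
      (hSo.inter isOpen_Iio) ⟨x₀, fun z hz => hz.2.le⟩ with hL | ⟨b, hL⟩ <;>
    rcases (isUpperSet_preimage_range_inter_Ioi hf₁ hf₂ hT hx₀).eq_empty_or_eq_Ioi
      (hSo.inter isOpen_Ioi) ⟨x₀, fun z hz => hz.2.le⟩ with hU | ⟨a, hU⟩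
  · exact absurd hne (by rw [hsplit, hL, hU, union_empty]; exact not_nonempty_empty)
  · exact Or.inl ⟨a, Or.inl (by rw [hsplit, hL, hU, empty_union])⟩
  · exact Or.inl ⟨b, Or.inr (by rw [hsplit, hL, hU, union_empty])⟩
  · refine Or.inr ⟨b, a, ?_, by rw [hsplit, hL, hU]⟩
    have hb : Iio b ⊆ Iio x₀ := hL ▸ inter_subset_right
    have ha : Ioi a ⊆ Ioi x₀ := hU ▸ inter_subset_right
    exact (Iio_subset_Iio_iff.1 hb).trans (Ioi_subset_Ioi_iff.1 ha)

/-- If the transition map were decreasing near the end `a` of the overlap, it would stay bounded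
there. -/
theorem strictMonoOn_Ioi_of_image_subset_Iio (hf₁ : IsOpenEmbedding f₁)
    (hf₂ : IsOpenEmbedding f₂) {a c : ℝ} (hsub : Ioi a ⊆ f₁ ⁻¹' range f₂)
    (ha : a ∉ f₁ ⁻¹' range f₂) (himg : transition f₁ f₂ '' Ioi a ⊆ Iio c) :
    StrictMonoOn (transition f₁ f₂) (Ioi a) := by
  refine (((continuousOn_transition hf₁.continuous hf₂).mono hsub).strictMonoOn_or_strictAntiOn
    nonempty_Ioi ((injOn_transition hf₁.injective).mono hsub)).resolve_right fun hanti => ha ?_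
  have hb : IsBounded (transition f₁ f₂ '' Ioo a (a + 1)) :=
    (Metric.isBounded_Icc (transition f₁ f₂ (a + 1)) c).subset <| image_subset_iff.2 fun z hz =>
      ⟨(hanti hz.1 (lt_add_one a) hz.2).le, (himg (mem_image_of_mem _ hz.1)).le⟩
  exact closure_subset_of_isBounded_image hf₁.continuous hf₂.continuous
    (Ioo_subset_Ioi_self.trans hsub) hb (by simp [closure_Ioo (lt_add_one a).ne])

theorem strictMonoOn_Iio_of_image_subset_Ioi (hf₁ : IsOpenEmbedding f₁)
    (hf₂ : IsOpenEmbedding f₂) {b c : ℝ} (hsub : Iio b ⊆ f₁ ⁻¹' range f₂)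
    (hb : b ∉ f₁ ⁻¹' range f₂) (himg : transition f₁ f₂ '' Iio b ⊆ Ioi c) :
    StrictMonoOn (transition f₁ f₂) (Iio b) := by
  refine (((continuousOn_transition hf₁.continuous hf₂).mono hsub).strictMonoOn_or_strictAntiOn
    nonempty_Iio ((injOn_transition hf₁.injective).mono hsub)).resolve_right fun hanti => hb ?_
  have hbdd : IsBounded (transition f₁ f₂ '' Ioo (b - 1) b) :=
    (Metric.isBounded_Icc c (transition f₁ f₂ (b - 1))).subset <| image_subset_iff.2 fun z hz =>
      ⟨(himg (mem_image_of_mem _ hz.2)).le, (hanti (sub_one_lt b) hz.2 hz.1).le⟩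
  exact closure_subset_of_isBounded_image hf₁.continuous hf₂.continuous
    (Ioo_subset_Iio_self.trans hsub) hbdd (by simp [closure_Ioo (sub_one_lt b).ne])

theorem isFreeInterval_union_of_preimage_eq (hf₁ : IsOpenEmbedding f₁)
    (hf₂ : IsOpenEmbedding f₂) {a b : ℝ} (hS : f₁ ⁻¹' range f₂ = Ioi a)
    (hT : f₂ ⁻¹' range f₁ = Iio b) : IsFreeInterval (range f₁ ∪ range f₂) := by
  set τ := transition f₁ f₂
  set q := a + 1
  set g := glue f₁ f₂ q (τ q)
  have hq : a < q := lt_add_one a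
  have himg : τ '' Ioi a = Iio b := by rw [← hS, ← hT]; exact image_transition hf₂.injective
  have hmono : StrictMonoOn τ (Ioi a) :=
    strictMonoOn_Ioi_of_image_subset_Iio hf₁ hf₂ hS.ge (by simp [hS]) himg.subset
  have hρ : StrictMonoOn (extendByTranslation τ q) (Ioi a) :=
    (hmono.mono Ioc_subset_Ioi_self).extendByTranslation
  have hρs : extendByTranslation τ q '' Ioi a = univ := by
    refine image_extendByTranslation hq fun y hy => ?_
    have hqb : τ q ∈ Iio b := himg ▸ mem_image_of_mem τ hq
    obtain ⟨t, ht, rfl⟩ : y ∈ τ '' Ioi a := himg ▸ mem_Iio.2 (hy.trans_lt hqb)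
    exact ⟨t, ⟨ht, (hmono.le_iff_le ht hq).1 hy⟩, rfl⟩
  have hg₁ : ∀ u ≤ a, g u = f₁ u := fun u hu => glue_of_le (hu.trans hq.le)
  have hg₂ := eqOn_glue_transition (q := q) hS.ge
  have hinj : Injective g := by
    intro u v huv
    rcases le_or_gt u a with hu | hu <;> rcases le_or_gt v a with hv | hv
    · exact hf₁.injective (by rwa [← hg₁ u hu, ← hg₁ v hv])
    · exact absurd (hS.subset ⟨_, (hg₂ hv).symm.trans (huv.symm.trans (hg₁ u hu))⟩) hu.not_gt
    · exact absurd (hS.subset ⟨_, (hg₂ hu).symm.trans (huv.trans (hg₁ v hv))⟩) hv.not_gt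
    · exact hρ.injOn hu hv (hf₂.injective ((hg₂ hu).symm.trans (huv.trans (hg₂ hv))))
  have hJ₂ : range f₂ ⊆ range g := by
    rintro _ ⟨s, rfl⟩
    obtain ⟨u, hu, rfl⟩ := hρs.symm ▸ mem_univ s
    exact ⟨u, hg₂ hu⟩
  have hrange : range g = range f₁ ∪ range f₂ := by
    refine range_glue_subset.antisymm (union_subset ?_ hJ₂)
    rintro _ ⟨t, rfl⟩
    rcases le_or_gt t a with ht | ht
    exacts [⟨t, hg₁ t ht⟩, hJ₂ (hS.ge ht)]
  have hloc : IsLocalHomeomorph g :=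
    isLocalHomeomorph_of_eqOn hf₁ hf₂ hq hρ hρs (fun u hu => glue_of_le hu.le) hg₂
  exact hrange ▸ (hloc.isOpenEmbedding_of_injective hinj).isFreeInterval_range

theorem isFreeInterval_union_of_isOpenRay (hf₁ : IsOpenEmbedding f₁) (hf₂ : IsOpenEmbedding f₂)
    (hS : IsOpenRay (f₁ ⁻¹' range f₂)) (hT : IsOpenRay (f₂ ⁻¹' range f₁)) :
    IsFreeInterval (range f₁ ∪ range f₂) := by
  obtain ⟨g₁, hg₁, hr₁, a, ha⟩ := exists_reparametrization_preimage_eq_Ioi hf₁ hS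
  obtain ⟨g₂, hg₂, hr₂, b, hb⟩ :=
    exists_reparametrization_preimage_eq_Iio hf₂ (J := range g₁) (hr₁ ▸ hT)
  rw [← hr₁, ← hr₂]
  exact isFreeInterval_union_of_preimage_eq hg₁ hg₂ (hr₂ ▸ ha) hb

/-- The arcs `f₁ [b - 1, a + 1]` and `f₂ [τ (a + 1), τ (b - 1)]` meet exactly in their end
points, and together they cover both charts. -/
theorem nonempty_homeomorph_addCircle_of_image_subset [CompactSpace X] [ConnectedSpace X]
    (hf₁ : IsOpenEmbedding f₁) (hf₂ : IsOpenEmbedding f₂) {a b a' b' : ℝ} (hba : b ≤ a)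
    (hba' : b' ≤ a') (hS : f₁ ⁻¹' range f₂ = Iio b ∪ Ioi a)
    (hT : f₂ ⁻¹' range f₁ = Iio b' ∪ Ioi a') (hsub : f₁ '' Ioi a ⊆ f₂ '' Iio b') :
    Nonempty (X ≃ₜ AddCircle (1 : ℝ)) := by
  set τ := transition f₁ f₂
  have hIioS : Iio b ⊆ f₁ ⁻¹' range f₂ := hS ▸ subset_union_left
  have hIoiS : Ioi a ⊆ f₁ ⁻¹' range f₂ := hS ▸ subset_union_right
  obtain ⟨hIoi, hIio⟩ := image_transition_Ioi_Iio hf₁ hf₂ hba' hS hT hsub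
  have hmIoi := strictMonoOn_Ioi_of_image_subset_Iio hf₁ hf₂ hIoiS (by simp [hS, hba]) hIoi.le
  have hmIio := strictMonoOn_Iio_of_image_subset_Ioi hf₁ hf₂ hIioS (by simp [hS, hba]) hIio.le
  set p := b - 1
  set q := a + 1
  have hp : p < b := sub_one_lt b
  have hq : a < q := lt_add_one a
  have hτq : τ q < b' := hIoi.subset (mem_image_of_mem τ hq)
  have hτp : a' < τ p := hIio.subset (mem_image_of_mem τ hp)
  have hiff (t : ℝ) (ht : t ∈ f₁ ⁻¹' range f₂) : t ∈ Icc p q ↔ τ t ∉ Ioo (τ q) (τ p) :=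
    mem_Icc_iff_notMem_Ioo_of_strictMonoOn hba hba' hp hq hIoi hIio hmIoi hmIio (hS ▸ ht)
  have hSc : (Icc p q)ᶜ ⊆ f₁ ⁻¹' range f₂ := hS ▸ compl_Icc_subset_Iio_union_Ioi hp hq
  have hTc : (Ioo (τ q) (τ p))ᶜ ⊆ f₂ ⁻¹' range f₁ := hT ▸ compl_Ioo_subset_Iio_union_Ioi hτq hτp
  have hr : p + (q + (τ p - τ q) - p) = q + (τ p - τ q) := add_sub_cancel p _
  refine nonempty_homeomorph_addCircle_of_injOn (p := p) (L := q + (τ p - τ q) - p)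
    (by linarith) (continuous_glue hf₁.continuous hf₂.continuous
      (apply_transition (hIoiS hq)).symm) ?_ ?_ ?_
  · rw [hr, glue_of_le (by linarith), glue_of_lt (by linarith), add_sub_cancel_left,
      sub_add_cancel, apply_transition (hIioS hp)]
  · rw [hr]
    refine injOn_glue hf₁.injective hf₂.injective fun t ht s hs h => (hiff t ⟨s, h.symm⟩).1 ht ?_
    rwa [show τ t = s from (transition_eq_iff hf₂.injective ⟨s, h.symm⟩).2 h]
  · rw [hr, ((image_subset_range _ _).trans range_glue_subset).antisymm
      ((range_union_range_subset_of_mem_Icc_iff hf₂.injective hSc hTc hiff).trans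
        (image_Icc_union_image_Ioo_subset_image_glue (by linarith) (by linarith)))]
    exact hf₁.isOpen_range.union hf₂.isOpen_range

theorem nonempty_homeomorph_addCircle_of_preimage_eq [CompactSpace X] [ConnectedSpace X]
    (hf₁ : IsOpenEmbedding f₁) (hf₂ : IsOpenEmbedding f₂) {a b a' b' : ℝ} (hba : b ≤ a)
    (hba' : b' ≤ a') (hS : f₁ ⁻¹' range f₂ = Iio b ∪ Ioi a)
    (hT : f₂ ⁻¹' range f₁ = Iio b' ∪ Ioi a') : Nonempty (X ≃ₜ AddCircle (1 : ℝ)) := by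
  have hIoiS : Ioi a ⊆ f₁ ⁻¹' range f₂ := hS ▸ subset_union_right
  have hlift (M : Set ℝ) (hM : transition f₁ f₂ '' Ioi a ⊆ M) : f₁ '' Ioi a ⊆ f₂ '' M := by
    rintro _ ⟨t, ht, rfl⟩
    exact ⟨_, hM (mem_image_of_mem _ ht), apply_transition (hIoiS ht)⟩
  rcases (isPreconnected_Ioi.image _ ((continuousOn_transition hf₁.continuous hf₂).mono
    hIoiS)).subset_Iio_or_subset_Ioi hba' (hT ▸ (image_mono hIoiS).trans
    mapsTo_transition.image_subset) with h | h
  · exact nonempty_homeomorph_addCircle_of_image_subset hf₁ hf₂ hba hba' hS hT (hlift _ h)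
  · refine nonempty_homeomorph_addCircle_of_image_subset hf₁ hf₂.comp_neg hba (neg_le_neg hba')
      (by rwa [neg_surjective.range_comp]) ?_ ?_
    · rw [preimage_comp, hT, union_comm]
      simp
    · rw [image_comp, image_neg_Iio, neg_neg]
      exact hlift _ h

theorem _root_.IsFreeInterval.union_or_nonempty_homeomorph_addCircle [CompactSpace X]
    [ConnectedSpace X] {J₁ J₂ : Set X} (h₁ : IsFreeInterval J₁) (h₂ : IsFreeInterval J₂)
    (hne : (J₁ ∩ J₂).Nonempty) (h₁₂ : ¬J₁ ⊆ J₂) (h₂₁ : ¬J₂ ⊆ J₁) :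
    IsFreeInterval (J₁ ∪ J₂) ∨ Nonempty (X ≃ₜ AddCircle (1 : ℝ)) := by
  obtain ⟨f₁, hf₁, rfl⟩ := h₁.exists_isOpenEmbedding
  obtain ⟨f₂, hf₂, rfl⟩ := h₂.exists_isOpenEmbedding
  have hS : (f₁ ⁻¹' range f₂).Nonempty := by
    obtain ⟨_, ⟨t, rfl⟩, hx⟩ := hne
    exact ⟨t, hx⟩
  have hT : (f₂ ⁻¹' range f₁).Nonempty := ⟨_, mapsTo_transition hS.some_mem⟩
  have hS' : f₁ ⁻¹' range f₂ ≠ univ := fun h => h₁₂ (range_subset_iff.2 fun t => h.ge trivial)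
  have hT' : f₂ ⁻¹' range f₁ ≠ univ := fun h => h₂₁ (range_subset_iff.2 fun t => h.ge trivial)
  rcases isOpenRay_or_eq_Iio_union_Ioi hf₁ hf₂ hS hS' hT' with hrS | ⟨b, a, hba, hSeq⟩ <;>
    rcases isOpenRay_or_eq_Iio_union_Ioi hf₂ hf₁ hT hT' hS' with hrT | ⟨b', a', hba', hTeq⟩
  · exact Or.inl (isFreeInterval_union_of_isOpenRay hf₁ hf₂ hrS hrT)
  · exact absurd (hTeq ▸ isPreconnected_preimage_range hf₁ hf₂ hrS.isPreconnected)
      (not_isPreconnected_Iio_union_Ioi hba')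
  · exact absurd (hSeq ▸ isPreconnected_preimage_range hf₂ hf₁ hrT.isPreconnected)
      (not_isPreconnected_Iio_union_Ioi hba)
  · exact Or.inr (nonempty_homeomorph_addCircle_of_preimage_eq hf₁ hf₂ hba hba' hSeq hTeq)

end FreeInterval

/-- In a continuum not homeomorphic to the circle, two maximal free
intervals are either disjoint or equal. -/
theorem stmt2 {X : Type*} [TopologicalSpace X] [CompactSpace X] [ConnectedSpace X]
    [TopologicalSpace.MetrizableSpace X] (hX : IsEmpty (X ≃ₜ AddCircle (1 : ℝ)))
    (J₁ J₂ : Set X)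
    (h₁ : IsFreeInterval J₁) (h₁max : ∀ J' : Set X, IsFreeInterval J' → J₁ ⊆ J' → J₁ = J')
    (h₂ : IsFreeInterval J₂) (h₂max : ∀ J' : Set X, IsFreeInterval J' → J₂ ⊆ J' → J₂ = J') :
    J₁ ∩ J₂ = ∅ ∨ J₁ = J₂ := by
  rcases (J₁ ∩ J₂).eq_empty_or_nonempty with h | hne
  · exact Or.inl h
  refine Or.inr ?_
  by_cases h₁₂ : J₁ ⊆ J₂
  · exact h₁max J₂ h₂ h₁₂
  by_cases h₂₁ : J₂ ⊆ J₁
  · exact (h₂max J₁ h₁ h₂₁).symm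
  rcases h₁.union_or_nonempty_homeomorph_addCircle h₂ hne h₁₂ h₂₁ with hU | hcirc
  · exact (h₁max _ hU subset_union_left).trans (h₂max _ hU subset_union_right).symm
  · exact absurd hcirc (not_nonempty_iff.2 hX)
end

section
/- Let X be a connected compact Hausdorff space and J a free interval of X such that X \ J is disconnected. Then the boundary ∂J of J is nowhere dense in X and has exactly two connected components. -/
/-!
Parametrize `J` by an embedding `f : ℝ → X`. Its frontier `closure J \ J` is the union of the
cluster sets of `f` at `+∞` and at `-∞`: a point of the frontier outside both has a neighbourhood
missing `f` near both ends, hence lies in the image of a compact interval, which is inside `J`.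
Each cluster set is a nested intersection of compact connected sets, hence nonempty and connected.
In a connected space a closed set with connected frontier is connected, so the disconnectedness of
`Jᶜ` forces the two cluster sets to be disjoint; they are then the two components of `∂J`.
Nowhere density holds for the frontier of any open set.
-/

open Set Topology

section

variable {X : Type*} [TopologicalSpace X]

theorem isPreconnected_iInter_of_directed [T2Space X] {ι : Type*} [Nonempty ι]
    {K : ι → Set X} (hdir : Directed (· ⊇ ·) K) (hK : ∀ i, IsCompact (K i))
    (hconn : ∀ i, IsPreconnected (K i)) : IsPreconnected (⋂ i, K i) := by
  have hc : IsCompact (⋂ i, K i) :=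
    (hK (Classical.arbitrary ι)).of_isClosed_subset
      (isClosed_iInter fun i => (hK i).isClosed) (iInter_subset _ _)
  rw [isPreconnected_closed_iff]
  intro t t' ht ht' hsub ⟨a, haK, hat⟩ ⟨b, hbK, hbt'⟩
  by_contra hdisj
  obtain ⟨U, V, hU, hV, htU, ht'V, hUV⟩ :=
    SeparatedNhds.of_isCompact_isCompact (hc.inter_right ht) (hc.inter_right ht')
      (disjoint_left.2 fun x hx hx' => hdisj ⟨x, hx.1, hx.2, hx'.2⟩)
  obtain ⟨i, hi⟩ := exists_subset_nhds_of_isCompact hdir hK (U := U ∪ V) fun x hx =>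
    (hU.union hV).mem_nhds ((hsub hx).imp (fun h => htU ⟨hx, h⟩) fun h => ht'V ⟨hx, h⟩)
  obtain ⟨x, -, hxU, hxV⟩ := hconn i U V hU hV hi
    ⟨a, mem_iInter.1 haK i, htU ⟨haK, hat⟩⟩ ⟨b, mem_iInter.1 hbK i, ht'V ⟨hbK, hbt'⟩⟩
  exact disjoint_left.1 hUV hxU hxV

theorem IsClosed.isPreconnected_of_isPreconnected_frontier [ConnectedSpace X] {F : Set X}
    (hF : IsClosed F) (hfr : IsPreconnected (frontier F)) : IsPreconnected F := by
  rw [isPreconnected_iff_subset_of_fully_disjoint_closed hF]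
  intro u v hu hv hsub huv
  wlog hfru : frontier F ⊆ u generalizing u v
  · have hfrv := ((isPreconnected_iff_subset_of_fully_disjoint_closed isClosed_frontier).1 hfr
      u v hu hv (hF.frontier_subset.trans hsub) huv).resolve_left hfru
    exact (this v u hv hu (union_comm u v ▸ hsub) huv.symm hfrv).symm
  -- `F ∩ v` avoids the frontier, so it is open as well as closed
  have hopen : F ∩ v = interior F ∩ uᶜ := by
    ext x
    refine ⟨fun ⟨hxF, hxv⟩ => ⟨?_, disjoint_right.1 huv hxv⟩, fun ⟨hxi, hxu⟩ =>
      ⟨interior_subset hxi, (hsub (interior_subset hxi)).resolve_left hxu⟩⟩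
    by_contra hxi
    exact disjoint_right.1 huv hxv (hfru ⟨subset_closure hxF, hxi⟩)
  have hclopen : IsClopen (F ∩ v) :=
    ⟨hF.inter hv, hopen ▸ isOpen_interior.inter hu.isOpen_compl⟩
  rcases isClopen_iff.1 hclopen with h | h
  · exact Or.inl fun x hx => (hsub hx).resolve_right fun hxv => h.subset ⟨hx, hxv⟩
  · exact Or.inr fun x _ => (h.symm.subset (mem_univ x)).2

theorem connectedComponentIn_union_eq_left {P Q : Set X} (hP : IsPreconnected P)
    (hPc : IsClosed P) (hQc : IsClosed Q) (hPQ : Disjoint P Q) {x : X} (hx : x ∈ P) :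
    connectedComponentIn (P ∪ Q) x = P := by
  refine subset_antisymm (fun y hy => ?_) (hP.subset_connectedComponentIn hx subset_union_left)
  refine (connectedComponentIn_subset _ _ hy).resolve_right fun hyQ => ?_
  obtain ⟨z, -, hzP, hzQ⟩ := isPreconnected_closed_iff.1 isPreconnected_connectedComponentIn
    P Q hPc hQc (connectedComponentIn_subset _ _)
    ⟨x, mem_connectedComponentIn (subset_union_left hx), hx⟩ ⟨y, hy, hyQ⟩
  exact disjoint_left.1 hPQ hzP hzQ

theorem setOf_connectedComponentIn_union_eq_pair {P Q : Set X} (hP : IsPreconnected P)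
    (hQ : IsPreconnected Q) (hPc : IsClosed P) (hQc : IsClosed Q) (hPne : P.Nonempty)
    (hQne : Q.Nonempty) (hPQ : Disjoint P Q) :
    {C | ∃ x ∈ P ∪ Q, C = connectedComponentIn (P ∪ Q) x} = {P, Q} := by
  have hPx {x} (hx : x ∈ P) := connectedComponentIn_union_eq_left hP hPc hQc hPQ hx
  have hQx {x} (hx : x ∈ Q) : connectedComponentIn (P ∪ Q) x = Q := by
    rw [union_comm]; exact connectedComponentIn_union_eq_left hQ hQc hPc hPQ.symm hx
  ext C
  constructor
  · rintro ⟨x, hx | hx, rfl⟩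
    exacts [Or.inl (hPx hx), Or.inr (hQx hx)]
  · rintro (rfl | rfl)
    exacts [⟨hPne.some, Or.inl hPne.some_mem, (hPx hPne.some_mem).symm⟩,
      ⟨hQne.some, Or.inr hQne.some_mem, (hQx hQne.some_mem).symm⟩]

/-- The cluster set at `-∞` is `clusterSetAtTop (f ∘ Neg.neg)`. -/
def clusterSetAtTop (f : ℝ → X) : Set X :=
  ⋂ r : ℝ, closure (f '' Ioi r)

section clusterSetAtTop

variable {f : ℝ → X}

theorem isClosed_clusterSetAtTop : IsClosed (clusterSetAtTop f) :=
  isClosed_iInter fun _ => isClosed_closure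

theorem directed_closure_image_Ioi :
    Directed (· ⊇ ·) fun r : ℝ => closure (f '' Ioi r) :=
  Antitone.directed_ge fun _ _ hrs => closure_mono (image_mono (Ioi_subset_Ioi hrs))

theorem clusterSetAtTop_nonempty [CompactSpace X] : (clusterSetAtTop f).Nonempty :=
  IsCompact.nonempty_iInter_of_directed_nonempty_isCompact_isClosed _
    directed_closure_image_Ioi (fun _ => (nonempty_Ioi.image f).closure)
    (fun _ => isClosed_closure.isCompact) fun _ => isClosed_closure

theorem isPreconnected_clusterSetAtTop [CompactSpace X] [T2Space X] (hf : Continuous f) :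
    IsPreconnected (clusterSetAtTop f) :=
  isPreconnected_iInter_of_directed directed_closure_image_Ioi
    (fun _ => isClosed_closure.isCompact)
    fun _ => (isPreconnected_Ioi.image f hf.continuousOn).closure

theorem disjoint_range_clusterSetAtTop (hf : IsEmbedding f) :
    Disjoint (range f) (clusterSetAtTop f) := by
  refine disjoint_left.2 ?_
  rintro _ ⟨t, rfl⟩ hK
  have := mem_iInter.1 hK (t + 1)
  rw [← mem_preimage, ← hf.closure_eq_preimage_closure_image, closure_Ioi] at this
  exact absurd this (by simp)

theorem clusterSetAtTop_subset_closure_range : clusterSetAtTop f ⊆ closure (range f) :=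
  (iInter_subset _ 0).trans (closure_mono (image_subset_range f _))

theorem closure_range_diff_subset_clusterSetAtTop_union [T2Space X] (hf : Continuous f) :
    closure (range f) \ range f ⊆ clusterSetAtTop f ∪ clusterSetAtTop (f ∘ Neg.neg) := by
  rintro x ⟨hx, hxf⟩
  by_contra hxK
  simp only [clusterSetAtTop, mem_union, mem_iInter, not_or, not_forall] at hxK
  obtain ⟨⟨r, hr⟩, ⟨s, hs⟩⟩ := hxK
  have hsplit : range f ⊆ f '' Icc (-s) r ∪ f '' Ioi r ∪ (f ∘ Neg.neg) '' Ioi s := by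
    rintro _ ⟨t, rfl⟩
    rcases lt_or_ge r t with hrt | htr
    · exact Or.inl (Or.inr (mem_image_of_mem f hrt))
    rcases lt_or_ge t (-s) with hts | hst
    · exact Or.inr ⟨-t, lt_neg_of_lt_neg hts, by simp⟩
    · exact Or.inl (Or.inl (mem_image_of_mem f ⟨hst, htr⟩))
  have := closure_mono hsplit hx
  rw [closure_union, closure_union, (isCompact_Icc.image hf).isClosed.closure_eq] at this
  rcases this with (h | h) | h
  exacts [hxf (image_subset_range f _ h), hr h, hs h]

theorem clusterSetAtTop_union_eq_closure_range_diff [T2Space X] (hf : IsEmbedding f) :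
    clusterSetAtTop f ∪ clusterSetAtTop (f ∘ Neg.neg) = closure (range f) \ range f := by
  have hf' : IsEmbedding (f ∘ Neg.neg) := hf.comp (Homeomorph.neg ℝ).isEmbedding
  have hrange : range (f ∘ Neg.neg) = range f := neg_surjective.range_comp f
  refine subset_antisymm (union_subset ?_ ?_)
    (closure_range_diff_subset_clusterSetAtTop_union hf.continuous)
  · exact subset_sdiff.2 ⟨clusterSetAtTop_subset_closure_range,
      (disjoint_range_clusterSetAtTop hf).symm⟩
  · rw [← hrange]
    exact subset_sdiff.2 ⟨clusterSetAtTop_subset_closure_range,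
      (disjoint_range_clusterSetAtTop hf').symm⟩

end clusterSetAtTop

end

/-- If `X` is a connected compact Hausdorff space and `J` a free interval
with `X \ J` disconnected, then the boundary of `J` is nowhere dense and has exactly two
connected components. -/
theorem stmt15 {X : Type*} [TopologicalSpace X] [CompactSpace X] [ConnectedSpace X]
    [T2Space X] (J : Set X) (hJopen : IsOpen J) (hJfree : Nonempty (↥J ≃ₜ ℝ))
    (hdisc : ¬ IsPreconnected (Jᶜ : Set X)) :
    interior (closure (frontier J)) = ∅ ∧
      ∃ A B : Set X, A ≠ B ∧
        {C : Set X | ∃ x ∈ frontier J, C = connectedComponentIn (frontier J) x}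
          = {A, B} := by
  refine ⟨?_, ?_⟩
  · rw [isClosed_frontier.closure_eq, ← frontier_compl]
    exact interior_frontier hJopen.isClosed_compl
  obtain ⟨h⟩ := hJfree
  set f : ℝ → X := (↑) ∘ h.symm
  have hf : IsEmbedding f :=
    hJopen.isOpenEmbedding_subtypeVal.isEmbedding.comp h.symm.isEmbedding
  have hfJ : range f = J := by rw [h.symm.surjective.range_comp, Subtype.range_coe]
  set Kp := clusterSetAtTop f
  set Km := clusterSetAtTop (f ∘ Neg.neg)
  have hfr : frontier J = Kp ∪ Km := by
    rw [hJopen.frontier_eq, clusterSetAtTop_union_eq_closure_range_diff hf, hfJ]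
  have hKp := isPreconnected_clusterSetAtTop (f := f) hf.continuous
  have hKm := isPreconnected_clusterSetAtTop (f := f ∘ Neg.neg)
    (hf.continuous.comp continuous_neg)
  have hdisj : Disjoint Kp Km := by
    by_contra hmeet
    rw [not_disjoint_iff_nonempty_inter] at hmeet
    refine hdisc (hJopen.isClosed_compl.isPreconnected_of_isPreconnected_frontier ?_)
    rw [frontier_compl, hfr]
    exact hKp.union' hmeet hKm
  refine ⟨Kp, Km, hdisj.ne clusterSetAtTop_nonempty.ne_empty, hfr ▸ ?_⟩
  exact setOf_connectedComponentIn_union_eq_pair hKp hKm isClosed_clusterSetAtTop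
    isClosed_clusterSetAtTop clusterSetAtTop_nonempty clusterSetAtTop_nonempty hdisj
end
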